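/- arXiv:2108.04299 — 3 statements merged into one kernel-verified Lean document; each statement's English description precedes it below -/
import Mathlib

section
/- The graph of the boundary of the (d+1)-dimensional cross-polytope is strictly balanced with essential density d: it has 2(d+1) vertices and 2d(d+1) edges, so its edge-to-vertex ratio is d, and every proper subgraph on at least one vertex has edge-to-vertex ratio strictly less than d. -/
/-!
A proper subgraph `H` of a connected `k`-regular graph has a vertex `v ∈ H` whose degree in `H`
is less than `k`: otherwise `H` would contain every edge at each of its vertices, so by
connectedness it would contain every vertex, and then every edge. The handshake lemma for `H`
then gives `2 e(H) < k v(H)`. The cross-polytope graph is the complete `(d+1)`-partite graph with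
parts of size two, which is `2d`-regular, and connected as soon as `d ≥ 1`.
-/

/-- The 1-skeleton of the boundary of the `(d+1)`-dimensional cross-polytope:
the complete `(d+1)`-partite graph with all parts of size 2. -/
def crossGraph (d : ℕ) : SimpleGraph (Fin (d + 1) × Fin 2) where
  Adj u v := u.1 ≠ v.1
  symm := ⟨fun _ _ h => Ne.symm h⟩
  loopless := ⟨fun _ h => h rfl⟩

namespace SimpleGraph.Subgraph

variable {V : Type*} {G : SimpleGraph V}

theorem eq_top_of_forall_adj (hG : G.Preconnected) {H : G.Subgraph} (hne : H.verts.Nonempty)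
    (h : ∀ v ∈ H.verts, ∀ w, G.Adj v w → H.Adj v w) : H = ⊤ := by
  obtain ⟨u, hu⟩ := hne
  have hverts : ∀ v, v ∈ H.verts := fun v => (hG u v).mem_subgraphVerts h hu
  ext v w
  · simp [hverts v]
  · exact ⟨fun hvw => H.adj_sub hvw, h v (hverts v) w⟩

theorem exists_adj_not_adj_of_ne_top (hG : G.Preconnected) {H : G.Subgraph} (hH : H ≠ ⊤)
    (hne : H.verts.Nonempty) : ∃ v ∈ H.verts, ∃ w, G.Adj v w ∧ ¬H.Adj v w := by
  by_contra! h
  exact hH (eq_top_of_forall_adj hG hne h)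

theorem degree_lt_of_not_adj (H : G.Subgraph) {v w : V} [Fintype (G.neighborSet v)]
    [Fintype (H.neighborSet v)] (hG : G.Adj v w) (hH : ¬H.Adj v w) : H.degree v < G.degree v := by
  rw [← card_neighborSet_eq_degree]
  exact Set.card_lt_card ((Set.ssubset_iff_of_subset (H.neighborSet_subset v)).2 ⟨w, hG, hH⟩)

theorem sum_degree_eq_two_mul_card_edgeSet [Fintype V] (H : G.Subgraph) [Fintype H.verts]
    [∀ v, Fintype (H.neighborSet v)] :
    ∑ v ∈ H.verts.toFinset, H.degree v = 2 * Nat.card H.edgeSet := by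
  classical
  rw [Finset.sum_subset (Finset.subset_univ _)
      (fun v _ hv => degree_of_notMem_verts (by simpa using hv))]
  simp_rw [← degree_spanningCoe]
  rw [sum_degrees_eq_twice_card_edges, edgeFinset_card, ← Nat.card_eq_fintype_card,
    edgeSet_spanningCoe]

theorem two_mul_card_edgeSet_lt [Fintype V] [DecidableRel G.Adj] {k : ℕ}
    (hG : G.Preconnected) (hreg : G.IsRegularOfDegree k) {H : G.Subgraph} (hH : H ≠ ⊤)
    (hne : H.verts.Nonempty) : 2 * Nat.card H.edgeSet < k * Nat.card H.verts := by
  classical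
  obtain ⟨v, hv, w, hGvw, hHvw⟩ := exists_adj_not_adj_of_ne_top hG hH hne
  calc 2 * Nat.card H.edgeSet = ∑ u ∈ H.verts.toFinset, H.degree u :=
        (sum_degree_eq_two_mul_card_edgeSet H).symm
    _ < ∑ _u ∈ H.verts.toFinset, k := by
        refine Finset.sum_lt_sum (fun u _ => hreg.degree_eq u ▸ H.degree_le u) ?_
        exact ⟨v, by simpa using hv, hreg.degree_eq v ▸ H.degree_lt_of_not_adj hGvw hHvw⟩
    _ = k * Nat.card H.verts := by
        rw [Finset.sum_const, smul_eq_mul, Set.toFinset_card, Nat.card_eq_fintype_card, mul_comm]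

end SimpleGraph.Subgraph

instance (d : ℕ) : DecidableRel (crossGraph d).Adj :=
  fun u v => inferInstanceAs (Decidable (u.1 ≠ v.1))

theorem crossGraph_isRegularOfDegree (d : ℕ) : (crossGraph d).IsRegularOfDegree (2 * d) := by
  intro v
  have h := SimpleGraph.degree_completeEquipartiteGraph (r := d + 1) (t := 2) v
  rw [Nat.add_sub_cancel, mul_comm] at h
  -- `crossGraph d` is definitionally `completeEquipartiteGraph (d + 1) 2`
  exact h

theorem crossGraph_connected {d : ℕ} (hd : 1 ≤ d) : (crossGraph d).Connected := by
  have : Nontrivial (Fin (d + 1)) := Fin.nontrivial_iff_two_le.2 (by omega)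
  refine ⟨fun u v => ?_⟩
  by_cases huv : u.1 = v.1
  · obtain ⟨i, hi⟩ := exists_ne u.1
    have huw : (crossGraph d).Adj u (i, 0) := Ne.symm hi
    have hwv : (crossGraph d).Adj (i, 0) v := (huv ▸ hi : i ≠ v.1)
    exact huw.reachable.trans hwv.reachable
  · exact SimpleGraph.Adj.reachable huv

theorem crossGraph_card_edgeSet (d : ℕ) : Nat.card (crossGraph d).edgeSet = 2 * d * (d + 1) := by
  have h := (crossGraph d).sum_degrees_eq_twice_card_edges
  simp only [(crossGraph_isRegularOfDegree d).degree_eq, Finset.sum_const, Finset.card_univ,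
    Fintype.card_prod, Fintype.card_fin, smul_eq_mul] at h
  rw [Nat.card_eq_fintype_card, ← SimpleGraph.edgeFinset_card]
  linarith

/-- the graph of the boundary of the `(d+1)`-cross-polytope is strictly
balanced with essential density `d`: it has `2(d+1)` vertices and `2d(d+1)` edges, so its
edge-to-vertex ratio is `d`, and every proper subgraph with at least one vertex has
edge-to-vertex ratio strictly less than `d`. -/
theorem stmt2 (d : ℕ) (hd : 1 ≤ d) :
    Nat.card (Fin (d + 1) × Fin 2) = 2 * (d + 1) ∧
    Nat.card (crossGraph d).edgeSet = 2 * d * (d + 1) ∧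
    (Nat.card (crossGraph d).edgeSet : ℚ) / (Nat.card (Fin (d + 1) × Fin 2) : ℚ) = d ∧
    ∀ H : (crossGraph d).Subgraph, H ≠ ⊤ → H.verts.Nonempty →
      (Nat.card H.edgeSet : ℚ) / (Nat.card H.verts : ℚ) < d := by
  have hV : Nat.card (Fin (d + 1) × Fin 2) = 2 * (d + 1) := by simp [mul_comm]
  refine ⟨hV, crossGraph_card_edgeSet d, ?_, fun H hH hne => ?_⟩
  · rw [hV, crossGraph_card_edgeSet d]
    push_cast
    field_simp
  · have h := SimpleGraph.Subgraph.two_mul_card_edgeSet_lt (crossGraph_connected hd).preconnected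
      (crossGraph_isRegularOfDegree d) hH hne
    have hpos : (0 : ℚ) < Nat.card H.verts :=
      Nat.cast_pos.2 (Nat.card_pos_iff.2 ⟨hne.to_subtype, Set.toFinite _⟩)
    rw [div_lt_iff₀ hpos]
    exact_mod_cast (by linarith : Nat.card H.edgeSet < d * Nat.card H.verts)
end

section
/- For d ≥ 1, every flag (clique) complex on at most 2d+2 vertices that is not d-collapsible must have every vertex of degree at least 2d in its 1-skeleton. -/
/-- An abstract simplicial complex on vertex type `V`: a family of nonempty
finite sets closed under passing to nonempty subsets. -/
structure AbsComplex (V : Type*) where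
  faces : Set (Finset V)
  nonempty_mem : ∀ ⦃σ⦄, σ ∈ faces → σ.Nonempty
  down_closed : ∀ ⦃σ τ : Finset V⦄, σ ∈ faces → τ ⊆ σ → τ.Nonempty → τ ∈ faces

/-- The clique (flag) complex of a graph: faces are the nonempty cliques. -/
def cliqueComplex {V : Type*} (G : SimpleGraph V) : AbsComplex V where
  faces := {σ | σ.Nonempty ∧ G.IsClique σ}
  nonempty_mem := fun _ h => h.1
  down_closed := fun _ _ h hsub hne => ⟨hne, h.2.subset (Finset.coe_subset.mpr hsub)⟩

/-- `σ` is a free face with unique proper coface `τ`. -/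
def IsFreeFace {V : Type*} (X : AbsComplex V) (σ τ : Finset V) : Prop :=
  σ ∈ X.faces ∧ τ ∈ X.faces ∧ σ ⊂ τ ∧ ∀ ρ ∈ X.faces, σ ⊂ ρ → ρ = τ

/-- An elementary collapse: remove a free face together with its unique proper coface. -/
def CollapseStep {V : Type*} (X Y : AbsComplex V) : Prop :=
  ∃ σ τ, IsFreeFace X σ τ ∧ Y.faces = X.faces \ {σ, τ}

/-- `X` is `d`-collapsible: some sequence of elementary collapses removes all
faces of dimension at least `d` (i.e. of cardinality at least `d + 1`). -/
def Collapsible {V : Type*} (d : ℕ) (X : AbsComplex V) : Prop :=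
  ∃ Y : AbsComplex V, Relation.ReflTransGen CollapseStep X Y ∧ ∀ σ ∈ Y.faces, σ.card ≤ d

/-!
Let `v` have fewer than `2d` neighbours, so that the flag complex is the deletion `del v` with
the cone `v * lk v` attached, where `lk v` is a flag complex on at most `2(d - 1) + 1` vertices
and `del v` one on at most `2d + 1`. A flag complex on at most `2d + 1` vertices is
`d`-collapsible: either it is a cone, which collapses by pairing each base face `σ` with at least
`d` vertices with `σ ∪ {v}`, largest first, or some vertex is not adjacent to all others and so has
fewer than `2d` neighbours, and we induct on the number of vertices.

To glue, collapse the link first, lifting each free pair `σ ⊂ τ` to `v ∪ σ ⊂ v ∪ τ`; then collapse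
the deletion. For the second phase to ignore the cone, every collapse is required to use a free
face with at least as many vertices as the target bound (`CollapsibleGE`): the faces left in the
cone then have at most `d` vertices and contain no free face of the deletion. For `d = 1` the link
may be a single vertex `w`, which is not `0`-collapsible; instead `{v} ⊂ {v, w}` is a free pair,
and collapsing it leaves the deletion.
-/

theorem Finset.insert_ssubset_iff_ssubset_erase {α : Type*} [DecidableEq α] {a : α}
    {s t : Finset α} (hs : a ∉ s) (ht : a ∈ t) : insert a s ⊂ t ↔ s ⊂ t.erase a := by
  conv_lhs => rw [← Finset.insert_erase ht]
  simp only [ssubset_iff_subset_not_subset, Finset.insert_subset_insert_iff hs,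
    Finset.insert_subset_insert_iff (Finset.notMem_erase a t)]

namespace AbsComplex

variable {V : Type*}

theorem ext {X Y : AbsComplex V} (h : X.faces = Y.faces) : X = Y := by
  cases X; cases Y; simpa using h

def CollapseStepGE (d : ℕ) (X Y : AbsComplex V) : Prop :=
  ∃ σ τ, IsFreeFace X σ τ ∧ d ≤ σ.card ∧ Y.faces = X.faces \ {σ, τ}

def CollapsibleGE (d : ℕ) (X : AbsComplex V) : Prop :=
  ∃ Y : AbsComplex V, Relation.ReflTransGen (CollapseStepGE d) X Y ∧ ∀ σ ∈ Y.faces, σ.card ≤ d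

theorem CollapsibleGE.collapsible {d : ℕ} {X : AbsComplex V} (h : CollapsibleGE d X) :
    Collapsible d X := by
  obtain ⟨Y, hXY, hY⟩ := h
  refine ⟨Y, Relation.ReflTransGen.mono ?_ _ _ hXY, hY⟩
  exact fun _ _ ⟨σ, τ, hfree, _, hfaces⟩ => ⟨σ, τ, hfree, hfaces⟩

theorem collapsibleGE_of_forall_card_le {d : ℕ} {X : AbsComplex V}
    (h : ∀ σ ∈ X.faces, σ.card ≤ d) : CollapsibleGE d X :=
  ⟨X, .refl, h⟩

theorem CollapseStepGE.collapsibleGE {d : ℕ} {X Y : AbsComplex V} (h : CollapseStepGE d X Y)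
    (hY : CollapsibleGE d Y) : CollapsibleGE d X := by
  obtain ⟨Z, hYZ, hZ⟩ := hY
  exact ⟨Z, hYZ.head h, hZ⟩

theorem CollapseStepGE.faces_subset {d : ℕ} {X Y : AbsComplex V} (h : CollapseStepGE d X Y) :
    Y.faces ⊆ X.faces := by
  obtain ⟨σ, τ, -, -, hY⟩ := h
  exact hY ▸ Set.sdiff_subset

theorem faces_subset_of_reflTransGen {d : ℕ} {X Y : AbsComplex V}
    (h : Relation.ReflTransGen (CollapseStepGE d) X Y) : Y.faces ⊆ X.faces := by
  induction h with
  | refl => exact subset_rfl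
  | tail _ hstep ih => exact hstep.faces_subset.trans ih

theorem mem_of_reflTransGen_of_card_lt {d : ℕ} {X Y : AbsComplex V}
    (h : Relation.ReflTransGen (CollapseStepGE d) X Y) {ρ : Finset V} (hρ : ρ ∈ X.faces)
    (hρd : ρ.card < d) : ρ ∈ Y.faces := by
  induction h with
  | refl => exact hρ
  | tail _ hstep ih =>
    obtain ⟨σ, τ, ⟨-, -, hστ, -⟩, hσd, hfaces⟩ := hstep
    have hτd : σ.card < τ.card := Finset.card_lt_card hστ
    rw [hfaces]
    refine ⟨ih, ?_⟩
    rintro (rfl | rfl) <;> omega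

theorem collapseStepGE_of_faces_eq_union {d : ℕ} {X Y : AbsComplex V} {A B : Set (Finset V)}
    {σ τ : Finset V} (hX : X.faces = A ∪ B) (hY : Y.faces = A ∪ B \ {σ, τ})
    (hσ : σ ∈ B) (hτ : τ ∈ B) (hστ : σ ⊂ τ) (huniq : ∀ ρ ∈ B, σ ⊂ ρ → ρ = τ)
    (hσd : d ≤ σ.card) (hA : ∀ ρ ∈ A, ¬ σ ⊆ ρ) : CollapseStepGE d X Y := by
  refine ⟨σ, τ, ⟨hX ▸ Or.inr hσ, hX ▸ Or.inr hτ, hστ, ?_⟩, hσd, ?_⟩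
  · rintro ρ hρ hσρ
    rw [hX] at hρ
    exact hρ.elim (fun hρA => absurd hσρ.subset (hA ρ hρA)) (huniq ρ · hσρ)
  · have hA' : Disjoint A {σ, τ} := by
      rw [Set.disjoint_right]
      rintro ρ (rfl | rfl) hρA
      exacts [hA ρ hρA subset_rfl, hA ρ hρA hστ.subset]
    rw [hX, hY, Set.union_sdiff_distrib, hA'.sdiff_eq_left]

def eraseMaximal (K : AbsComplex V) (σ : Finset V) (hσ : Maximal (· ∈ K.faces) σ) :
    AbsComplex V where
  faces := K.faces \ {σ}
  nonempty_mem _ hρ := K.nonempty_mem hρ.1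
  down_closed ρ τ hρ hτρ hτ := by
    refine ⟨K.down_closed hρ.1 hτρ hτ, ?_⟩
    rintro rfl
    exact hρ.2 (le_antisymm (hσ.2 hρ.1 hτρ) hτρ)

section Cone

variable [DecidableEq V] (v : V)

/-- The faces `insert v ρ` of the cone `v * F`, for `ρ ∈ F` and for `ρ = ∅`. -/
def coneFaces (F : Set (Finset V)) : Set (Finset V) :=
  {σ | v ∈ σ ∧ ((σ.erase v).Nonempty → σ.erase v ∈ F)}

/-- The complex `D ∪ v * L`. -/
def attachCone (D L : AbsComplex V) (hLD : L.faces ⊆ D.faces) : AbsComplex V where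
  faces := D.faces ∪ coneFaces v L.faces
  nonempty_mem := by
    rintro σ (hσ | ⟨hvσ, -⟩)
    exacts [D.nonempty_mem hσ, ⟨v, hvσ⟩]
  down_closed := by
    rintro σ τ (hσ | ⟨hvσ, hσL⟩) hτσ hτ
    · exact Or.inl (D.down_closed hσ hτσ hτ)
    by_cases hvτ : v ∈ τ
    · have hτσ' : τ.erase v ⊆ σ.erase v := Finset.erase_subset_erase v hτσ
      exact Or.inr ⟨hvτ, fun hne => L.down_closed (hσL (hne.mono hτσ')) hτσ' hne⟩
    · have hτσ' : τ ⊆ σ.erase v := Finset.subset_erase.mpr ⟨hτσ, hvτ⟩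
      exact Or.inl (D.down_closed (hLD (hσL (hτ.mono hτσ'))) hτσ' hτ)

variable {v}

theorem mem_attachCone {D L : AbsComplex V} {hLD : L.faces ⊆ D.faces} {σ : Finset V} :
    σ ∈ (attachCone v D L hLD).faces ↔ σ ∈ D.faces ∨ σ ∈ coneFaces v L.faces :=
  Iff.rfl

theorem insert_mem_coneFaces {F : Set (Finset V)} {σ : Finset V} (hvσ : v ∉ σ) :
    insert v σ ∈ coneFaces v F ↔ (σ.Nonempty → σ ∈ F) := by
  simp [coneFaces, Finset.erase_insert hvσ]

theorem coneFaces_sdiff {F T : Set (Finset V)} (hT : ∀ σ ∈ T, v ∉ σ ∧ σ.Nonempty) :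
    coneFaces v (F \ T) = coneFaces v F \ insert v '' T := by
  ext ρ
  simp only [coneFaces, Set.mem_sdiff, Set.mem_ofPred_eq, Set.mem_image]
  constructor
  · rintro ⟨hvρ, hρ⟩
    refine ⟨⟨hvρ, fun hne => (hρ hne).1⟩, ?_⟩
    rintro ⟨σ, hσT, rfl⟩
    obtain ⟨hvσ, hσ⟩ := hT σ hσT
    rw [Finset.erase_insert hvσ] at hρ
    exact (hρ hσ).2 hσT
  · rintro ⟨⟨hvρ, hρ⟩, hρT⟩
    refine ⟨hvρ, fun hne => ⟨hρ hne, fun hT' => hρT ⟨_, hT', Finset.insert_erase hvρ⟩⟩⟩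

theorem collapseStepGE_attachCone_of_link {c : ℕ} {D L L₂ : AbsComplex V}
    {hLD : L.faces ⊆ D.faces} {hL₂D : L₂.faces ⊆ D.faces} (hv : ∀ σ ∈ D.faces, v ∉ σ)
    (h : CollapseStepGE c L L₂) :
    CollapseStepGE (c + 1) (attachCone v D L hLD) (attachCone v D L₂ hL₂D) := by
  obtain ⟨σ, τ, ⟨hσ, hτ, hστ, huniq⟩, hσc, hL₂⟩ := h
  have hvσ := hv σ (hLD hσ)
  have hvτ := hv τ (hLD hτ)
  refine collapseStepGE_of_faces_eq_union (A := D.faces) (B := coneFaces v L.faces) rfl ?_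
    ((insert_mem_coneFaces hvσ).mpr fun _ => hσ) ((insert_mem_coneFaces hvτ).mpr fun _ => hτ)
    ?_ ?_ ?_ ?_
  · have hT : ∀ ρ ∈ ({σ, τ} : Set (Finset V)), v ∉ ρ ∧ ρ.Nonempty := by
      rintro ρ (rfl | rfl)
      exacts [⟨hvσ, L.nonempty_mem hσ⟩, ⟨hvτ, L.nonempty_mem hτ⟩]
    simp only [attachCone, hL₂, coneFaces_sdiff hT, Set.image_pair]
  · rwa [Finset.insert_ssubset_iff_ssubset_erase hvσ (Finset.mem_insert_self v τ),
      Finset.erase_insert hvτ]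
  · intro ρ hρ hσρ
    rw [Finset.insert_ssubset_iff_ssubset_erase hvσ hρ.1] at hσρ
    rw [← Finset.insert_erase hρ.1, huniq _ (hρ.2 ((L.nonempty_mem hσ).mono hσρ.subset)) hσρ]
  · rw [Finset.card_insert_of_notMem hvσ]; omega
  · exact fun ρ hρ hσρ => hv ρ hρ (hσρ (Finset.mem_insert_self v σ))

theorem collapseStepGE_attachCone_of_base {c : ℕ} {D D₂ L : AbsComplex V}
    {hLD : L.faces ⊆ D.faces} {hLD₂ : L.faces ⊆ D₂.faces} (hv : ∀ σ ∈ D.faces, v ∉ σ)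
    (hLc : ∀ ρ ∈ L.faces, ρ.card ≤ c) (h : CollapseStepGE (c + 1) D D₂) :
    CollapseStepGE (c + 1) (attachCone v D L hLD) (attachCone v D₂ L hLD₂) := by
  obtain ⟨σ, τ, ⟨hσ, hτ, hστ, huniq⟩, hσc, hD₂⟩ := h
  refine collapseStepGE_of_faces_eq_union (A := coneFaces v L.faces) (B := D.faces)
    (Set.union_comm _ _) ?_ hσ hτ hστ huniq hσc ?_
  · simp only [attachCone, hD₂, Set.union_comm]
  · intro ρ hρ hσρ
    have hσρ' : σ ⊆ ρ.erase v := Finset.subset_erase.mpr ⟨hσρ, hv σ hσ⟩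
    have := Finset.card_le_card hσρ'
    have := hLc _ (hρ.2 ((D.nonempty_mem hσ).mono hσρ'))
    omega

theorem collapseStepGE_attachCone_of_faces_eq_singleton {D L : AbsComplex V}
    {hLD : L.faces ⊆ D.faces} {w : V} (hv : ∀ σ ∈ D.faces, v ∉ σ) (hL : L.faces = {{w}}) :
    CollapseStepGE 1 (attachCone v D L hLD) D := by
  have hvw : v ≠ w := fun h => hv {w} (hLD (hL ▸ rfl)) (Finset.mem_singleton.mpr h)
  have hcone : coneFaces v L.faces = {{v}, {v, w}} := by
    ext ρ
    simp only [coneFaces, hL, Set.mem_ofPred_eq, Set.mem_singleton_iff, Set.mem_insert_iff]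
    constructor
    · rintro ⟨hvρ, hρ⟩
      rw [← Finset.insert_erase hvρ]
      rcases (ρ.erase v).eq_empty_or_nonempty with h | h
      · simp [h]
      · simp [hρ h]
    · rintro (rfl | rfl) <;> simp [hvw]
  refine collapseStepGE_of_faces_eq_union (A := D.faces) (B := {{v}, {v, w}}) (σ := {v})
    (τ := {v, w}) (congrArg (D.faces ∪ ·) hcone) (by simp) (by simp) (by simp) ?_ ?_ le_rfl
    fun ρ hρ hvρ => hv ρ hρ (Finset.singleton_subset_iff.mp hvρ)
  · rw [Finset.pair_comm]
    exact Finset.ssubset_insert (Finset.notMem_singleton.mpr hvw.symm)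
  · rintro ρ (rfl | rfl) hvρ
    exacts [absurd hvρ (lt_irrefl _), rfl]

theorem collapseStepGE_attachCone_self {d : ℕ} {K : AbsComplex V} {σ : Finset V}
    (hv : ∀ ρ ∈ K.faces, v ∉ ρ) (hσ : Maximal (· ∈ K.faces) σ) (hσd : d ≤ σ.card) :
    CollapseStepGE d (attachCone v K K subset_rfl)
      (attachCone v (K.eraseMaximal σ hσ) (K.eraseMaximal σ hσ) subset_rfl) := by
  have hvσ := hv σ hσ.1
  refine ⟨σ, insert v σ, ⟨Or.inl hσ.1, Or.inr ((insert_mem_coneFaces hvσ).mpr fun _ => hσ.1),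
    Finset.ssubset_insert hvσ, ?_⟩, hσd, ?_⟩
  · rintro ρ (hρ | hρ) hσρ
    · exact absurd (hσ.2 hρ hσρ.subset) (not_subset_of_ssubset hσρ)
    · have hσρ' : σ ⊆ ρ.erase v := Finset.subset_erase.mpr ⟨hσρ.subset, hvσ⟩
      have hρσ := hσ.2 (hρ.2 ((K.nonempty_mem hσ.1).mono hσρ')) hσρ'
      rw [← Finset.insert_erase hρ.1, le_antisymm hρσ hσρ']
  · have hvK : insert v σ ∉ K.faces := fun h => hv _ h (Finset.mem_insert_self v σ)
    have hσK : σ ∉ coneFaces v K.faces := fun h => hvσ h.1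
    change K.faces \ {σ} ∪ coneFaces v (K.faces \ {σ}) = _
    rw [coneFaces_sdiff (by simpa using ⟨hvσ, K.nonempty_mem hσ.1⟩), Set.image_singleton]
    ext ρ
    simp only [mem_attachCone, Set.mem_union, Set.mem_sdiff, Set.mem_insert_iff,
      Set.mem_singleton_iff]
    grind

theorem card_le_of_mem_coneFaces {c : ℕ} {F : Set (Finset V)} {σ : Finset V}
    (hF : ∀ ρ ∈ F, ρ.card ≤ c) (hσ : σ ∈ coneFaces v F) : σ.card ≤ c + 1 := by
  rw [← Finset.card_erase_add_one hσ.1]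
  rcases (σ.erase v).eq_empty_or_nonempty with h | h
  · simp [h]
  · exact Nat.succ_le_succ (hF _ (hσ.2 h))

theorem reflTransGen_attachCone_of_link {c : ℕ} {D L L' : AbsComplex V}
    {hLD : L.faces ⊆ D.faces} (hv : ∀ σ ∈ D.faces, v ∉ σ)
    (h : Relation.ReflTransGen (CollapseStepGE c) L L') (hL'D : L'.faces ⊆ D.faces) :
    Relation.ReflTransGen (CollapseStepGE (c + 1))
      (attachCone v D L hLD) (attachCone v D L' hL'D) := by
  induction h with
  | refl => exact .refl
  | tail hLM hstep ih =>
    exact (ih ((faces_subset_of_reflTransGen hLM).trans hLD)).tail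
      (collapseStepGE_attachCone_of_link hv hstep)

theorem reflTransGen_attachCone_of_base {c : ℕ} {D D' L : AbsComplex V}
    {hLD : L.faces ⊆ D.faces} (hv : ∀ σ ∈ D.faces, v ∉ σ) (hLc : ∀ ρ ∈ L.faces, ρ.card ≤ c)
    (h : Relation.ReflTransGen (CollapseStepGE (c + 1)) D D') (hLD' : L.faces ⊆ D'.faces) :
    Relation.ReflTransGen (CollapseStepGE (c + 1))
      (attachCone v D L hLD) (attachCone v D' L hLD') := by
  induction h with
  | refl => exact .refl
  | tail hDM hstep ih =>
    exact (ih (hLD'.trans hstep.faces_subset)).tail (collapseStepGE_attachCone_of_base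
      (fun σ hσ => hv σ (faces_subset_of_reflTransGen hDM hσ)) hLc hstep)

theorem collapsibleGE_attachCone {c : ℕ} {D L : AbsComplex V} {hLD : L.faces ⊆ D.faces}
    (hv : ∀ σ ∈ D.faces, v ∉ σ) (hL : CollapsibleGE c L) (hD : CollapsibleGE (c + 1) D) :
    CollapsibleGE (c + 1) (attachCone v D L hLD) := by
  obtain ⟨L', hLL', hL'⟩ := hL
  obtain ⟨D', hDD', hD'⟩ := hD
  have hL'D : L'.faces ⊆ D.faces := (faces_subset_of_reflTransGen hLL').trans hLD
  have hL'D' : L'.faces ⊆ D'.faces := fun ρ hρ =>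
    mem_of_reflTransGen_of_card_lt hDD' (hL'D hρ) (Nat.lt_succ_of_le (hL' ρ hρ))
  refine ⟨attachCone v D' L' hL'D', (reflTransGen_attachCone_of_link hv hLL' hL'D).trans
    (reflTransGen_attachCone_of_base hv hL' hDD' hL'D'), ?_⟩
  rintro σ (hσ | hσ)
  exacts [hD' σ hσ, card_le_of_mem_coneFaces hL' hσ]

theorem collapsibleGE_attachCone_self {d : ℕ} (hd : 1 ≤ d) {K : AbsComplex V}
    (hK : K.faces.Finite) (hv : ∀ σ ∈ K.faces, v ∉ σ) :
    CollapsibleGE d (attachCone v K K subset_rfl) := by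
  induction hn : K.faces.ncard using Nat.strong_induction_on generalizing K with
  | _ n ih =>
  by_cases hbig : ∃ σ ∈ K.faces, d ≤ σ.card
  · obtain ⟨σ, ⟨hσK, hσd⟩, hσmax⟩ := (hK.subset (Set.sep_subset _ _)).exists_maximal hbig
    have hσ : Maximal (· ∈ K.faces) σ :=
      ⟨hσK, fun ρ hρ hσρ => hσmax ⟨hρ, hσd.trans (Finset.card_le_card hσρ)⟩ hσρ⟩
    refine (collapseStepGE_attachCone_self hv hσ hσd).collapsibleGE
      (ih _ ?_ (hK.subset Set.sdiff_subset) (fun ρ hρ => hv ρ hρ.1) rfl)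
    exact hn ▸ Set.ncard_sdiff_singleton_lt_of_mem hσK hK
  · push Not at hbig
    refine collapsibleGE_of_forall_card_le ?_
    rintro σ (hσ | hσ)
    · exact (hbig σ hσ).le
    · have hK' : ∀ ρ ∈ K.faces, ρ.card ≤ d - 1 := fun ρ hρ => Nat.le_sub_one_of_lt (hbig ρ hρ)
      exact (card_le_of_mem_coneFaces hK' hσ).trans (by omega)

end Cone

end AbsComplex

open AbsComplex

section CliqueComplexOn

variable {V : Type*}

def cliqueComplexOn (G : SimpleGraph V) (S : Finset V) : AbsComplex V where
  faces := {σ | σ.Nonempty ∧ G.IsClique (σ : Set V) ∧ σ ⊆ S}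
  nonempty_mem _ hσ := hσ.1
  down_closed _ _ hσ hτσ hτ :=
    ⟨hτ, hσ.2.1.subset (Finset.coe_subset.mpr hτσ), hτσ.trans hσ.2.2⟩

variable {G : SimpleGraph V}

theorem cliqueComplex_eq_cliqueComplexOn_univ [Fintype V] :
    cliqueComplex G = cliqueComplexOn G Finset.univ :=
  AbsComplex.ext <| by simp [cliqueComplex, cliqueComplexOn]

theorem cliqueComplexOn_mono {S T : Finset V} (h : S ⊆ T) :
    (cliqueComplexOn G S).faces ⊆ (cliqueComplexOn G T).faces :=
  fun _ hσ => ⟨hσ.1, hσ.2.1, hσ.2.2.trans h⟩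

theorem finite_faces_cliqueComplexOn (S : Finset V) : (cliqueComplexOn G S).faces.Finite :=
  S.powerset.finite_toSet.subset fun _ hσ => Finset.mem_coe.mpr (Finset.mem_powerset.mpr hσ.2.2)

theorem card_le_of_mem_cliqueComplexOn {S σ : Finset V} (hσ : σ ∈ (cliqueComplexOn G S).faces) :
    σ.card ≤ S.card :=
  Finset.card_le_card hσ.2.2

theorem faces_cliqueComplexOn_singleton (w : V) : (cliqueComplexOn G {w}).faces = {{w}} := by
  ext σ
  simp only [cliqueComplexOn, Set.mem_ofPred_eq, Set.mem_singleton_iff, Finset.subset_singleton_iff]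
  constructor
  · rintro ⟨hσ, -, rfl | rfl⟩
    exacts [absurd hσ Finset.not_nonempty_empty, rfl]
  · rintro rfl
    simp

theorem collapsibleGE_cliqueComplexOn_of_card_le {d : ℕ} {S : Finset V} (hS : S.card ≤ d) :
    CollapsibleGE d (cliqueComplexOn G S) :=
  collapsibleGE_of_forall_card_le fun _ hσ => (card_le_of_mem_cliqueComplexOn hσ).trans hS

variable [DecidableEq V]

theorem notMem_of_mem_cliqueComplexOn_erase {S σ : Finset V} {v : V}
    (hσ : σ ∈ (cliqueComplexOn G (S.erase v)).faces) : v ∉ σ :=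
  fun hvσ => Finset.notMem_erase v S (hσ.2.2 hvσ)

variable [DecidableRel G.Adj]

theorem filter_adj_subset_erase (S : Finset V) (v : V) : S.filter (G.Adj v) ⊆ S.erase v :=
  fun _ hu => Finset.mem_erase.mpr
    ⟨(G.ne_of_adj (Finset.mem_filter.mp hu).2).symm, (Finset.mem_filter.mp hu).1⟩

theorem cliqueComplexOn_eq_attachCone {S : Finset V} {v : V} (hv : v ∈ S) :
    cliqueComplexOn G S = attachCone v (cliqueComplexOn G (S.erase v))
      (cliqueComplexOn G (S.filter (G.Adj v)))
      (cliqueComplexOn_mono (filter_adj_subset_erase S v)) := by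
  refine AbsComplex.ext (Set.ext fun σ => ?_)
  simp only [mem_attachCone, cliqueComplexOn, coneFaces, Set.mem_ofPred_eq]
  by_cases hvσ : v ∈ σ
  · obtain ⟨τ, hvτ, rfl⟩ : ∃ τ, v ∉ τ ∧ σ = insert v τ :=
      ⟨σ.erase v, Finset.notMem_erase v σ, (Finset.insert_erase hvσ).symm⟩
    have hS : ¬ insert v τ ⊆ S.erase v := fun h =>
      Finset.notMem_erase v S (h (Finset.mem_insert_self v τ))
    rcases τ.eq_empty_or_nonempty with rfl | hτ
    · simp [hv]
    · simp only [hS, Finset.erase_insert hvτ, Finset.coe_insert, SimpleGraph.isClique_insert,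
        Finset.insert_nonempty, hτ, true_and, and_false, false_or, forall_const,
        Finset.subset_iff, Finset.mem_filter]
      grind
  · simp [hvσ, Finset.subset_erase]

theorem collapsibleGE_cliqueComplexOn_of_forall_adj {d : ℕ} (hd : 1 ≤ d) {S : Finset V} {v : V}
    (hv : v ∈ S) (hadj : ∀ u ∈ S, u ≠ v → G.Adj v u) : CollapsibleGE d (cliqueComplexOn G S) := by
  have hlink : S.filter (G.Adj v) = S.erase v := by
    ext u
    simp only [Finset.mem_filter, Finset.mem_erase]
    exact ⟨fun h => ⟨(G.ne_of_adj h.2).symm, h.1⟩, fun h => ⟨h.2, hadj u h.2 h.1⟩⟩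
  rw [cliqueComplexOn_eq_attachCone hv]
  convert collapsibleGE_attachCone_self hd (finite_faces_cliqueComplexOn (S.erase v))
    fun _ => notMem_of_mem_cliqueComplexOn_erase using 3

theorem collapsibleGE_cliqueComplexOn_of_card_filter_adj_lt {d : ℕ} (hd : 1 ≤ d) {S : Finset V}
    {v : V} (hsmall : ∀ T : Finset V, T.card < S.card → ∀ c, 1 ≤ c → T.card ≤ 2 * c + 1 →
      CollapsibleGE c (cliqueComplexOn G T))
    (hS : S.card ≤ 2 * d + 2) (hv : v ∈ S) (hlink : (S.filter (G.Adj v)).card < 2 * d) :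
    CollapsibleGE d (cliqueComplexOn G S) := by
  obtain ⟨c, rfl⟩ : ∃ c, d = c + 1 := ⟨d - 1, by omega⟩
  have hvD : ∀ σ ∈ (cliqueComplexOn G (S.erase v)).faces, v ∉ σ :=
    fun _ => notMem_of_mem_cliqueComplexOn_erase
  have hdel : CollapsibleGE (c + 1) (cliqueComplexOn G (S.erase v)) :=
    hsmall _ (Finset.card_erase_lt_of_mem hv) _ hd (by rw [Finset.card_erase_of_mem hv]; omega)
  rw [cliqueComplexOn_eq_attachCone hv]
  rcases le_or_gt (S.filter (G.Adj v)).card c with hlc | hlc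
  · exact collapsibleGE_attachCone hvD (collapsibleGE_cliqueComplexOn_of_card_le hlc) hdel
  rcases Nat.eq_zero_or_pos c with rfl | hc
  · obtain ⟨w, hw⟩ := Finset.card_eq_one.mp (by omega : (S.filter (G.Adj v)).card = 1)
    refine (collapseStepGE_attachCone_of_faces_eq_singleton (w := w) hvD ?_).collapsibleGE hdel
    rw [hw, faces_cliqueComplexOn_singleton]
  · have hlinkS : (S.filter (G.Adj v)).card < S.card :=
      (Finset.card_le_card (filter_adj_subset_erase S v)).trans_lt (Finset.card_erase_lt_of_mem hv)
    exact collapsibleGE_attachCone hvD (hsmall _ hlinkS c hc (by omega)) hdel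

theorem collapsibleGE_cliqueComplexOn {d : ℕ} (hd : 1 ≤ d) {S : Finset V}
    (hS : S.card ≤ 2 * d + 1) : CollapsibleGE d (cliqueComplexOn G S) := by
  induction hn : S.card using Nat.strong_induction_on generalizing S d with
  | _ n ih =>
  by_cases hcone : ∃ v ∈ S, ∀ u ∈ S, u ≠ v → G.Adj v u
  · obtain ⟨v, hv, hadj⟩ := hcone
    exact collapsibleGE_cliqueComplexOn_of_forall_adj hd hv hadj
  rcases S.eq_empty_or_nonempty with rfl | ⟨v, hv⟩
  · exact collapsibleGE_cliqueComplexOn_of_card_le (by simp)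
  push Not at hcone
  obtain ⟨u, hu, huv, hvu⟩ := hcone v hv
  have hlink : (S.filter (G.Adj v)).card < (S.erase v).card :=
    Finset.card_lt_card ⟨filter_adj_subset_erase S v,
      fun h => hvu (Finset.mem_filter.mp (h (Finset.mem_erase.mpr ⟨huv, hu⟩))).2⟩
  rw [Finset.card_erase_of_mem hv] at hlink
  exact collapsibleGE_cliqueComplexOn_of_card_filter_adj_lt hd
    (fun T hT c hc hTc => ih _ (hn ▸ hT) hc hTc rfl) (by omega) hv (by omega)

end CliqueComplexOn

/-- for `d ≥ 1`, a flag complex on at most `2d + 2` vertices which is not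
`d`-collapsible has all vertices of degree at least `2d` in its 1-skeleton. -/
theorem stmt3 {V : Type*} [Fintype V] [DecidableEq V] (d : ℕ) (hd : 1 ≤ d)
    (G : SimpleGraph V) [DecidableRel G.Adj]
    (hcard : Fintype.card V ≤ 2 * d + 2)
    (hnc : ¬ Collapsible d (cliqueComplex G)) :
    ∀ v : V, 2 * d ≤ G.degree v := by
  intro v
  by_contra! hdeg
  apply hnc
  rw [cliqueComplex_eq_cliqueComplexOn_univ]
  refine (collapsibleGE_cliqueComplexOn_of_card_filter_adj_lt hd
    (fun T _ c hc hT => collapsibleGE_cliqueComplexOn hc hT) (by rwa [Finset.card_univ])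
    (Finset.mem_univ v) ?_).collapsible
  rwa [← SimpleGraph.neighborFinset_eq_filter, SimpleGraph.card_neighborFinset_eq_degree]
end

section
/- Let H be a finite graph with minimum degree at least 2d such that every vertex of degree exactly 2d has at least one neighbor of degree strictly greater than 2d, and assume H has at least one vertex of degree greater than 2d. Then the number of edges of H is at least (d + 1/(4+4d))·|V(H)|. -/
/-!
Split the vertices at the threshold `k = 2d` into the high ones (degree `> k`) and the rest,
which have degree exactly `k`. Counting degrees gives `2|E| ≥ k|V| + #high`; since each
remaining vertex has a high neighbour, the high degrees sum to at least `#rest`, which gives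
`2|E| ≥ (k + 1) #rest`. Adding `k + 1` times the first bound to the second eliminates the
split: `2 (k + 2) |E| ≥ (k + 1)² |V|`, which for `k = 2d` is the claim.
-/

open Finset

namespace SimpleGraph

variable {V : Type*} [Fintype V] {G : SimpleGraph V} [DecidableRel G.Adj] {k : ℕ}

theorem mul_card_low_le_sum_degree (hmin : ∀ v, k ≤ G.degree v) :
    k * #{v | ¬k < G.degree v} ≤ ∑ v with ¬k < G.degree v, G.degree v := by
  rw [mul_comm]
  exact card_nsmul_le_sum _ _ _ fun v _ => hmin v

theorem mul_card_add_card_high_le (hmin : ∀ v, k ≤ G.degree v) :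
    k * Fintype.card V + #{v | k < G.degree v} ≤ 2 * #G.edgeFinset := by
  rw [← G.sum_degrees_eq_twice_card_edges,
    ← sum_filter_add_sum_filter_not univ (fun v => k < G.degree v), ← card_univ,
    ← card_filter_add_card_filter_not (s := univ) (fun v => k < G.degree v)]
  have hhigh : (k + 1) * #{v | k < G.degree v} ≤ ∑ v with k < G.degree v, G.degree v := by
    rw [mul_comm]
    exact card_nsmul_le_sum _ _ (k + 1) fun v hv => (mem_filter.mp hv).2
  have hlow := mul_card_low_le_sum_degree hmin
  linarith

variable [DecidableEq V]

theorem card_le_sum_degree_of_forall_exists_adj {S T : Finset V}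
    (h : ∀ v ∈ T, ∃ w ∈ S, G.Adj v w) : #T ≤ ∑ w ∈ S, G.degree w := by
  have hT : T ⊆ S.biUnion (G.neighborFinset ·) := fun v hv => by
    obtain ⟨w, hw, hvw⟩ := h v hv
    exact mem_biUnion.mpr ⟨w, hw, (G.mem_neighborFinset w v).mpr hvw.symm⟩
  exact (card_le_card hT).trans card_biUnion_le

theorem succ_mul_card_low_le (hmin : ∀ v, k ≤ G.degree v)
    (hnbr : ∀ v, G.degree v = k → ∃ w, G.Adj v w ∧ k < G.degree w) :
    (k + 1) * #{v | ¬k < G.degree v} ≤ 2 * #G.edgeFinset := by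
  rw [← G.sum_degrees_eq_twice_card_edges,
    ← sum_filter_add_sum_filter_not univ (fun v => k < G.degree v)]
  have hhigh : #{v | ¬k < G.degree v} ≤ ∑ v with k < G.degree v, G.degree v := by
    refine card_le_sum_degree_of_forall_exists_adj fun v hv => ?_
    obtain ⟨w, hvw, hw⟩ := hnbr v (le_antisymm (not_lt.mp (mem_filter.mp hv).2) (hmin v))
    exact ⟨w, mem_filter.mpr ⟨mem_univ w, hw⟩, hvw⟩
  have hlow := mul_card_low_le_sum_degree hmin
  linarith

theorem sq_succ_mul_card_le (hmin : ∀ v, k ≤ G.degree v)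
    (hnbr : ∀ v, G.degree v = k → ∃ w, G.Adj v w ∧ k < G.degree w) :
    (k + 1) ^ 2 * Fintype.card V ≤ 2 * (k + 2) * #G.edgeFinset := by
  have hsplit := card_filter_add_card_filter_not (s := univ) (fun v => k < G.degree v)
  rw [card_univ] at hsplit
  have hhigh := mul_card_add_card_high_le hmin
  have hlow := succ_mul_card_low_le hmin hnbr
  calc (k + 1) ^ 2 * Fintype.card V
      = (k + 1) * (k * Fintype.card V + #{v | k < G.degree v})
        + (k + 1) * #{v | ¬k < G.degree v} := by rw [← hsplit]; ring
    _ ≤ (k + 1) * (2 * #G.edgeFinset) + 2 * #G.edgeFinset := by gcongr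
    _ = 2 * (k + 2) * #G.edgeFinset := by ring

end SimpleGraph

theorem stmt5_general {V : Type*} [Fintype V] [DecidableEq V] (d : ℕ)
    (H : SimpleGraph V) [DecidableRel H.Adj]
    (hmin : ∀ v : V, 2 * d ≤ H.degree v)
    (hnbr : ∀ v : V, H.degree v = 2 * d → ∃ w : V, H.Adj v w ∧ 2 * d < H.degree w) :
    ((d : ℝ) + 1 / (4 + 4 * d)) * Fintype.card V ≤ (H.edgeFinset.card : ℝ) := by
  have hkey : ((2 * d + 1) ^ 2 * Fintype.card V : ℝ) ≤ (4 + 4 * d) * H.edgeFinset.card := by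
    exact_mod_cast (H.sq_succ_mul_card_le hmin hnbr).trans_eq (by ring)
  rw [show (d : ℝ) + 1 / (4 + 4 * d) = (2 * d + 1) ^ 2 / (4 + 4 * d) by field_simp; ring,
    div_mul_eq_mul_div, div_le_iff₀ (by positivity)]
  linarith

/-- if a finite graph has minimum degree at least `2d`, every vertex of
degree exactly `2d` has a neighbor of degree strictly greater than `2d`, and some vertex
has degree greater than `2d`, then the graph has at least `(d + 1/(4+4d))·|V|` edges. -/
theorem stmt5 {V : Type*} [Fintype V] [DecidableEq V] (d : ℕ) (hd : 1 ≤ d)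
    (H : SimpleGraph V) [DecidableRel H.Adj]
    (hmin : ∀ v : V, 2 * d ≤ H.degree v)
    (hnbr : ∀ v : V, H.degree v = 2 * d → ∃ w : V, H.Adj v w ∧ 2 * d < H.degree w)
    (hbig : ∃ v : V, 2 * d < H.degree v) :
    ((d : ℝ) + 1 / (4 + 4 * d)) * Fintype.card V ≤ (H.edgeFinset.card : ℝ) :=
  stmt5_general d H hmin hnbr
end
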